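/- Let p ∈ (1,∞), n ≥ 1. If x = (x₀, x̄) ∈ K_p^{n+1} \ {0} and z = (z₀, z̄) ∈ ∂K_q^{n+1} \ {0} (so z₀ = ‖z̄‖_q > 0, with 1/p+1/q=1) satisfy ⟨x, z⟩ = 0, then x₀ > 0 and x₀⁻¹·x̄ = -sgn(z̄) ∘ |z₀⁻¹·z̄|^(q-1) (componentwise). -/

import Mathlib

/-!
Normalise `aᵢ = x₀⁻¹ xᵢ` and `bᵢ = z₀⁻¹ zᵢ`, so that `∑ |aᵢ|ᵖ ≤ 1`, `∑ |bᵢ|^q = 1` and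
orthogonality reads `∑ aᵢ bᵢ = -1`. Summing Young's inequality `-aᵢbᵢ ≤ |aᵢ|ᵖ/p + |bᵢ|^q/q` gives
`1 ≤ 1/p + 1/q = 1`, so every instance of it is an equality. The equality case of Young's
inequality gives `|aᵢ|ᵖ = |bᵢ|^q`, i.e. `|aᵢ| = |bᵢ|^(q-1)`, and `aᵢ bᵢ = -|aᵢ| |bᵢ|` fixes the sign.
-/

open scoped RealInnerProductSpace

open Finset

namespace Real

theorem sign_mul_of_pos {t : ℝ} (ht : 0 < t) (r : ℝ) : sign (t * r) = sign r := by
  rcases lt_trichotomy r 0 with hr | rfl | hr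
  · rw [sign_of_neg hr, sign_of_neg (mul_neg_of_pos_of_neg ht hr)]
  · rw [mul_zero]
  · rw [sign_of_pos hr, sign_of_pos (mul_pos ht hr)]

theorem eq_rpow_sub_one_of_rpow_eq_rpow {a b p q : ℝ} (ha : 0 ≤ a) (hb : 0 ≤ b)
    (hpq : p.HolderConjugate q) (h : a ^ p = b ^ q) : a = b ^ (q - 1) := by
  rw [← hpq.symm.div_conj_eq_sub_one, div_eq_mul_inv, rpow_mul hb, ← h,
    rpow_rpow_inv ha hpq.ne_zero]

theorem eq_neg_sign_mul_abs_rpow_of_young_eq {a b p q : ℝ} (hpq : p.HolderConjugate q)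
    (h : -(a * b) = |a| ^ p / p + |b| ^ q / q) : a = -sign b * |b| ^ (q - 1) := by
  have hyoung : |a| * |b| = |a| ^ p / p + |b| ^ q / q :=
    le_antisymm (young_inequality_of_nonneg (abs_nonneg a) (abs_nonneg b) hpq)
      (h ▸ abs_mul a b ▸ neg_le_abs (a * b))
  have habs : |a| = |b| ^ (q - 1) :=
    eq_rpow_sub_one_of_rpow_eq_rpow (abs_nonneg a) (abs_nonneg b) hpq
      ((young_inequality_eq_iff_of_nonneg (abs_nonneg a) (abs_nonneg b) hpq).1 hyoung)
  have hprod : a * b = -(|a| * |b|) := by linarith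
  rw [← habs]
  rcases lt_trichotomy b 0 with hb | rfl | hb
  · have : a = |a| := mul_right_cancel₀ hb.ne (by rw [hprod, abs_of_neg hb]; ring)
    rw [sign_of_neg hb]
    linarith
  · rw [abs_zero, zero_rpow hpq.symm.sub_one_ne_zero, abs_eq_zero] at habs
    simp [habs]
  · have : a = -|a| := mul_right_cancel₀ hb.ne' (by rw [hprod, abs_of_pos hb]; ring)
    rw [sign_of_pos hb]
    linarith

theorem eq_neg_sign_mul_abs_rpow_of_sum_mul_eq_neg_one {ι : Type*} (s : Finset ι)
    {a b : ι → ℝ} {p q : ℝ} (hpq : p.HolderConjugate q) (ha : ∑ i ∈ s, |a i| ^ p ≤ 1)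
    (hb : ∑ i ∈ s, |b i| ^ q ≤ 1) (hab : ∑ i ∈ s, a i * b i = -1) :
    ∀ i ∈ s, a i = -sign (b i) * |b i| ^ (q - 1) := by
  set gap : ι → ℝ := fun i ↦ |a i| ^ p / p + |b i| ^ q / q + a i * b i
  have hgap_nonneg : ∀ i ∈ s, 0 ≤ gap i := fun i _ ↦ by
    have := young_inequality (-a i) (b i) hpq
    rw [abs_neg] at this
    simp only [gap]
    linarith
  have hgap_sum : ∑ i ∈ s, gap i ≤ 0 := by
    have hsplit : ∑ i ∈ s, gap i
        = (∑ i ∈ s, |a i| ^ p) / p + (∑ i ∈ s, |b i| ^ q) / q + ∑ i ∈ s, a i * b i := by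
      simp only [gap, sum_add_distrib, sum_div]
    rw [hsplit, hab]
    have hsum_inv := hpq.inv_add_inv_eq_one
    have ha_div : (∑ i ∈ s, |a i| ^ p) / p ≤ p⁻¹ := by
      rw [div_eq_mul_inv]; exact mul_le_of_le_one_left hpq.inv_nonneg ha
    have hb_div : (∑ i ∈ s, |b i| ^ q) / q ≤ q⁻¹ := by
      rw [div_eq_mul_inv]; exact mul_le_of_le_one_left hpq.symm.inv_nonneg hb
    linarith
  intro i hi
  have hgap_zero := (sum_eq_zero_iff_of_nonneg hgap_nonneg).1
    (le_antisymm hgap_sum (sum_nonneg hgap_nonneg)) i hi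
  exact eq_neg_sign_mul_abs_rpow_of_young_eq hpq (by simp only [gap] at hgap_zero; linarith)

theorem sum_abs_inv_mul_rpow_le_one {ι : Type*} (s : Finset ι) {v : ι → ℝ} {p t : ℝ}
    (hp : 0 < p) (ht : 0 < t) (h : (∑ i ∈ s, |v i| ^ p) ^ (1 / p) ≤ t) :
    ∑ i ∈ s, |t⁻¹ * v i| ^ p ≤ 1 := by
  have hS : ∑ i ∈ s, |v i| ^ p ≤ t ^ p := by
    rwa [one_div, rpow_inv_le_iff_of_pos (sum_nonneg fun i _ ↦ by positivity) ht.le hp] at h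
  calc ∑ i ∈ s, |t⁻¹ * v i| ^ p = (t ^ p)⁻¹ * ∑ i ∈ s, |v i| ^ p := by
        simp only [abs_mul, abs_inv, abs_of_pos ht, mul_sum,
          mul_rpow (inv_nonneg.2 ht.le) (abs_nonneg _), inv_rpow ht.le]
    _ ≤ 1 := inv_mul_le_one_of_le₀ hS (by positivity)

theorem eq_zero_of_rpow_sum_abs_rpow_le_zero {ι : Type*} (s : Finset ι) {v : ι → ℝ} {p : ℝ}
    (hp : 0 < p) (h : (∑ i ∈ s, |v i| ^ p) ^ (1 / p) ≤ 0) : ∀ i ∈ s, v i = 0 := by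
  have hS : ∑ i ∈ s, |v i| ^ p ≤ 0 := by
    rwa [one_div, rpow_inv_le_iff_of_pos (sum_nonneg fun i _ ↦ by positivity) le_rfl hp,
      zero_rpow hp.ne'] at h
  intro i hi
  have := (sum_eq_zero_iff_of_nonneg fun i _ ↦ by positivity).1
    (le_antisymm hS (sum_nonneg fun i _ ↦ by positivity)) i hi
  simpa [rpow_eq_zero_iff_of_nonneg, hp.ne'] using this

end Real

theorem EuclideanSpace.inner_eq_mul_add_sum_succ {n : ℕ}
    (x z : EuclideanSpace ℝ (Fin (n + 1))) :
    ⟪x, z⟫ = x 0 * z 0 + ∑ i : Fin n, x i.succ * z i.succ := by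
  simp [PiLp.inner_apply, Fin.sum_univ_succ, mul_comm]

theorem apex_pos_of_rpow_sum_abs_rpow_le {n : ℕ} {p : ℝ} (hp : 0 < p)
    {x : EuclideanSpace ℝ (Fin (n + 1))} (hx : (∑ i : Fin n, |x i.succ| ^ p) ^ (1 / p) ≤ x 0)
    (hx0 : x ≠ 0) : 0 < x 0 := by
  refine (le_trans (by positivity) hx).lt_of_ne fun h ↦ hx0 ?_
  have htail := Real.eq_zero_of_rpow_sum_abs_rpow_le_zero univ hp (h ▸ hx)
  ext i
  cases i using Fin.cases with
  | zero => exact h.symm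
  | succ j => exact htail j (mem_univ j)

theorem stmt_19_general (n : ℕ) (p q : ℝ) (hp : 1 < p)
    (hpq : 1 / p + 1 / q = 1)
    (x : EuclideanSpace ℝ (Fin (n + 1)))
    (hx : (∑ i : Fin n, |x i.succ| ^ p) ^ (1 / p) ≤ x 0) (hx0 : x ≠ 0)
    (z : EuclideanSpace ℝ (Fin (n + 1)))
    (hz0 : z 0 = (∑ i : Fin n, |z i.succ| ^ q) ^ (1 / q)) (hz0pos : 0 < z 0)
    (horth : ⟪x, z⟫ = 0) :
    0 < x 0 ∧ ∀ i : Fin n,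
      (x 0)⁻¹ * x i.succ = -Real.sign (z i.succ) * |(z 0)⁻¹ * z i.succ| ^ (q - 1) := by
  have hpq' : p.HolderConjugate q := Real.holderConjugate_iff.2 ⟨hp, by simpa using hpq⟩
  have hx0pos := apex_pos_of_rpow_sum_abs_rpow_le hpq'.pos hx hx0
  refine ⟨hx0pos, fun i ↦ ?_⟩
  have hab : ∑ i : Fin n, ((x 0)⁻¹ * x i.succ) * ((z 0)⁻¹ * z i.succ) = -1 := by
    rw [EuclideanSpace.inner_eq_mul_add_sum_succ] at horth
    simp_rw [mul_mul_mul_comm _ (x _), ← mul_sum]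
    field_simp
    linarith
  rw [← Real.sign_mul_of_pos (inv_pos.2 hz0pos)]
  exact Real.eq_neg_sign_mul_abs_rpow_of_sum_mul_eq_neg_one univ hpq'
    (Real.sum_abs_inv_mul_rpow_le_one univ hpq'.pos hx0pos hx)
    (Real.sum_abs_inv_mul_rpow_le_one univ hpq'.symm.pos hz0pos hz0.ge) hab i (mem_univ i)

/-- If `x ∈ K_p^{n+1} \ {0}` is orthogonal to `z ∈ ∂K_q^{n+1} \ {0}`, then
`x₀ > 0` and `x₀⁻¹·x̄ = -sgn(z̄) ∘ |z₀⁻¹·z̄|^(q-1)`. -/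
theorem stmt_19 (n : ℕ) (hn : 1 ≤ n) (p q : ℝ) (hp : 1 < p) (hq : 1 < q)
    (hpq : 1 / p + 1 / q = 1)
    (x : EuclideanSpace ℝ (Fin (n + 1)))
    (hx : (∑ i : Fin n, |x i.succ| ^ p) ^ (1 / p) ≤ x 0) (hx0 : x ≠ 0)
    (z : EuclideanSpace ℝ (Fin (n + 1)))
    (hz0 : z 0 = (∑ i : Fin n, |z i.succ| ^ q) ^ (1 / q)) (hz0pos : 0 < z 0)
    (horth : ⟪x, z⟫ = 0) :
    0 < x 0 ∧ ∀ i : Fin n,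
      (x 0)⁻¹ * x i.succ = -Real.sign (z i.succ) * |(z 0)⁻¹ * z i.succ| ^ (q - 1) :=
  stmt_19_general n p q hp hpq x hx hx0 z hz0 hz0pos horth
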